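/- arXiv:1507.02995 — 7 statements merged into one kernel-verified Lean document; each statement's English description precedes it below -/
import Mathlib

section
/- The operator T_1 defined by (T_1 f)(z) = ((t_1+u_1+z)(t_1-u_1+z)/(2z))·(f(-z) - f(z)) + t_1·f(z) satisfies T_1² = t_1²·𝟙 on functions f : ℂ → ℂ (away from z = 0). -/
/-!
Write `T₁ = c (R_z - 𝟙) + t₁ 𝟙` with `c z = (t₁ + u₁ + z)(t₁ - u₁ + z) / (2z)`. Since
`c z + c (-z) = ((t₁ + z)² - (t₁ - z)²) / (2z) = 2 t₁`, applying `R_z - 𝟙` to `T₁ f` gives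
`-t₁ (R_z - 𝟙) f`, and then `T₁² f = -t₁ c (R_z - 𝟙) f + t₁ T₁ f = t₁² f`.
-/

/-- The operator `T₁` of the degenerate double affine Hecke algebra of type
`(C₁∨, C₁)`. -/
noncomputable def T1op (t1 u1 : ℂ) (f : ℂ → ℂ) : ℂ → ℂ :=
  fun z => (t1 + u1 + z) * (t1 - u1 + z) / (2 * z) * (f (-z) - f z) + t1 * f z

section ReflectionOp

variable {α R : Type*} [InvolutiveNeg α] [CommRing R]

def reflectionOp (c : α → R) (t : R) (f : α → R) : α → R :=
  fun z => c z * (f (-z) - f z) + t * f z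

lemma reflectionOp_neg_sub (c : α → R) (t : R) (f : α → R) (z : α)
    (hc : c z + c (-z) = 2 * t) :
    reflectionOp c t f (-z) - reflectionOp c t f z = -t * (f (-z) - f z) := by
  simp only [reflectionOp, neg_neg]
  linear_combination (f z - f (-z)) * hc

lemma reflectionOp_sq_apply (c : α → R) (t : R) (f : α → R) (z : α)
    (hc : c z + c (-z) = 2 * t) :
    reflectionOp c t (reflectionOp c t f) z = t ^ 2 * f z := by
  have h := reflectionOp_neg_sub c t f z hc
  simp only [reflectionOp] at h ⊢
  rw [h]
  ring

end ReflectionOp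

lemma T1op_eq_reflectionOp (t1 u1 : ℂ) :
    T1op t1 u1 = reflectionOp (fun z => (t1 + u1 + z) * (t1 - u1 + z) / (2 * z)) t1 :=
  rfl

lemma T1op_coeff_add_coeff_neg (t1 u1 z : ℂ) (hz : z ≠ 0) :
    (t1 + u1 + z) * (t1 - u1 + z) / (2 * z) + (t1 + u1 + -z) * (t1 - u1 + -z) / (2 * -z)
      = 2 * t1 := by
  field_simp
  ring

/-- `T₁² = t₁² 𝟙` away from `z = 0`. -/
theorem T1_sq (t1 u1 : ℂ) (f : ℂ → ℂ) (z : ℂ) (hz : z ≠ 0) :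
    T1op t1 u1 (T1op t1 u1 f) z = t1 ^ 2 * f z := by
  rw [T1op_eq_reflectionOp]
  exact reflectionOp_sq_apply _ _ f z (T1op_coeff_add_coeff_neg t1 u1 z hz)
end

section
/- In any associative algebra, if K_1, K_2, K_3 satisfy the Bannai–Ito relations {K_1,K_2} = K_3 + ω_3, {K_2,K_3} = K_1 + ω_1, {K_3,K_1} = K_2 + ω_2 (with ω_i central), then Q = K_1² + K_2² + K_3² commutes with each of K_1, K_2, K_3. -/
/-- The Casimir element `Q = K₁² + K₂² + K₃²` of the Bannai–Ito algebra is central. -/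
theorem BI_casimir_central {R : Type*} [Ring R] (K1 K2 K3 ω1 ω2 ω3 : R)
    (hω1 : ∀ x : R, Commute ω1 x) (hω2 : ∀ x : R, Commute ω2 x)
    (hω3 : ∀ x : R, Commute ω3 x)
    (h12 : K1 * K2 + K2 * K1 = K3 + ω3)
    (h23 : K2 * K3 + K3 * K2 = K1 + ω1)
    (h31 : K3 * K1 + K1 * K3 = K2 + ω2) :
    Commute (K1 ^ 2 + K2 ^ 2 + K3 ^ 2) K1 ∧
    Commute (K1 ^ 2 + K2 ^ 2 + K3 ^ 2) K2 ∧
    Commute (K1 ^ 2 + K2 ^ 2 + K3 ^ 2) K3 := by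
  have aux : ∀ a b c w : R, (∀ x : R, Commute w x) → a * b + b * a = c + w →
      b ^ 2 * a - a * b ^ 2 = b * c - c * b := by
    intro a b c w hw h
    have h2 := (hw b).eq
    calc b ^ 2 * a - a * b ^ 2
        = b * (a * b + b * a) - (a * b + b * a) * b := by noncomm_ring
      _ = b * (c + w) - (c + w) * b := by rw [h]
      _ = b * c - c * b + (b * w - w * b) := by noncomm_ring
      _ = b * c - c * b := by rw [← h2]; noncomm_ring
  have h12' : K2 * K1 + K1 * K2 = K3 + ω3 := by rw [add_comm]; exact h12
  have h23' : K3 * K2 + K2 * K3 = K1 + ω1 := by rw [add_comm]; exact h23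
  have h31' : K1 * K3 + K3 * K1 = K2 + ω2 := by rw [add_comm]; exact h31
  refine ⟨?_, ?_, ?_⟩
  · have e2 := aux K1 K2 K3 ω3 hω3 h12
    have e3 := aux K1 K3 K2 ω2 hω2 h31'
    have : (K1 ^ 2 + K2 ^ 2 + K3 ^ 2) * K1 - K1 * (K1 ^ 2 + K2 ^ 2 + K3 ^ 2)
        = (K2 ^ 2 * K1 - K1 * K2 ^ 2) + (K3 ^ 2 * K1 - K1 * K3 ^ 2) := by noncomm_ring
    rw [e2, e3] at this
    have h0 : (K1 ^ 2 + K2 ^ 2 + K3 ^ 2) * K1 - K1 * (K1 ^ 2 + K2 ^ 2 + K3 ^ 2) = 0 := by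
      rw [this]; noncomm_ring
    exact sub_eq_zero.mp h0
  · have e1 := aux K2 K1 K3 ω3 hω3 h12'
    have e3 := aux K2 K3 K1 ω1 hω1 h23
    have : (K1 ^ 2 + K2 ^ 2 + K3 ^ 2) * K2 - K2 * (K1 ^ 2 + K2 ^ 2 + K3 ^ 2)
        = (K1 ^ 2 * K2 - K2 * K1 ^ 2) + (K3 ^ 2 * K2 - K2 * K3 ^ 2) := by noncomm_ring
    rw [e1, e3] at this
    have h0 : (K1 ^ 2 + K2 ^ 2 + K3 ^ 2) * K2 - K2 * (K1 ^ 2 + K2 ^ 2 + K3 ^ 2) = 0 := by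
      rw [this]; noncomm_ring
    exact sub_eq_zero.mp h0
  · have e1 := aux K3 K1 K2 ω2 hω2 h31
    have e2 := aux K3 K2 K1 ω1 hω1 h23'
    have : (K1 ^ 2 + K2 ^ 2 + K3 ^ 2) * K3 - K3 * (K1 ^ 2 + K2 ^ 2 + K3 ^ 2)
        = (K1 ^ 2 * K3 - K3 * K1 ^ 2) + (K2 ^ 2 * K3 - K3 * K2 ^ 2) := by noncomm_ring
    rw [e1, e2] at this
    have h0 : (K1 ^ 2 + K2 ^ 2 + K3 ^ 2) * K3 - K3 * (K1 ^ 2 + K2 ^ 2 + K3 ^ 2) = 0 := by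
      rw [this]; noncomm_ring
    exact sub_eq_zero.mp h0
end

section
/- In any associative algebra, if A_1, A_2, A_3 satisfy the non-compact Bannai–Ito relations {A_1,A_2} = A_3 + α_3, {A_2,A_3} = -A_1 + α_1, {A_3,A_1} = A_2 + α_2 (with α_i central), then Z = A_1² - A_2² - A_3² commutes with each of A_1, A_2, A_3. -/
private lemma NCBI_aux {R : Type*} [Ring R] (X Y W : R) (h : X * Y + Y * X = W) :
    Y ^ 2 * X - X * Y ^ 2 = Y * W - W * Y := by
  have h' : Y * X = W - X * Y := by rw [← h]; noncomm_ring
  calc Y ^ 2 * X - X * Y ^ 2 = Y * (Y * X) - X * Y ^ 2 := by noncomm_ring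
    _ = Y * (W - X * Y) - X * Y ^ 2 := by rw [h']
    _ = Y * W - (Y * X) * Y - X * Y ^ 2 := by noncomm_ring
    _ = Y * W - (W - X * Y) * Y - X * Y ^ 2 := by rw [h']
    _ = Y * W - W * Y := by noncomm_ring

/-- The Casimir element `Z = A₁² - A₂² - A₃²` of the non-compact Bannai–Ito
algebra is central. -/
theorem NCBI_casimir_central {R : Type*} [Ring R] (A1 A2 A3 α1 α2 α3 : R)
    (hα1 : ∀ x : R, Commute α1 x) (hα2 : ∀ x : R, Commute α2 x)
    (hα3 : ∀ x : R, Commute α3 x)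
    (h12 : A1 * A2 + A2 * A1 = A3 + α3)
    (h23 : A2 * A3 + A3 * A2 = -A1 + α1)
    (h31 : A3 * A1 + A1 * A3 = A2 + α2) :
    Commute (A1 ^ 2 - A2 ^ 2 - A3 ^ 2) A1 ∧
    Commute (A1 ^ 2 - A2 ^ 2 - A3 ^ 2) A2 ∧
    Commute (A1 ^ 2 - A2 ^ 2 - A3 ^ 2) A3 := by
  have h12' : A2 * A1 + A1 * A2 = A3 + α3 := by exact (add_comm _ _).trans h12
  have h23' : A3 * A2 + A2 * A3 = -A1 + α1 := by exact (add_comm _ _).trans h23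
  have h31' : A1 * A3 + A3 * A1 = A2 + α2 := by exact (add_comm _ _).trans h31
  have c1 := (hα1 A1).eq
  have c2A3 := (hα2 A3).eq
  have c3A2 := (hα3 A2).eq
  have c3A1 := (hα3 A1).eq
  have c1A2 := (hα1 A2).eq
  have c1A3 := (hα1 A3).eq
  have c2A1 := (hα2 A1).eq
  refine ⟨?_, ?_, ?_⟩
  · -- commutes with A1
    have e2 := NCBI_aux A1 A2 (A3 + α3) h12
    have e3 := NCBI_aux A1 A3 (A2 + α2) h31'
    have key : A2 ^ 2 * A1 - A1 * A2 ^ 2 + (A3 ^ 2 * A1 - A1 * A3 ^ 2) = 0 := by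
      rw [e2, e3]; simp only [mul_add, add_mul, c3A2, c2A3]; noncomm_ring
    show (A1 ^ 2 - A2 ^ 2 - A3 ^ 2) * A1 = A1 * (A1 ^ 2 - A2 ^ 2 - A3 ^ 2)
    have expand : (A1 ^ 2 - A2 ^ 2 - A3 ^ 2) * A1 - A1 * (A1 ^ 2 - A2 ^ 2 - A3 ^ 2)
        = -(A2 ^ 2 * A1 - A1 * A2 ^ 2 + (A3 ^ 2 * A1 - A1 * A3 ^ 2)) := by noncomm_ring
    rw [key, neg_zero, sub_eq_zero] at expand
    exact expand
  · -- commutes with A2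
    have e1 := NCBI_aux A2 A1 (A3 + α3) h12'
    have e3 := NCBI_aux A2 A3 (-A1 + α1) h23
    have key : A1 ^ 2 * A2 - A2 * A1 ^ 2 - (A3 ^ 2 * A2 - A2 * A3 ^ 2) = 0 := by
      rw [e1, e3]; simp only [mul_add, add_mul, c3A1, c1A3]; noncomm_ring
    show (A1 ^ 2 - A2 ^ 2 - A3 ^ 2) * A2 = A2 * (A1 ^ 2 - A2 ^ 2 - A3 ^ 2)
    have expand : (A1 ^ 2 - A2 ^ 2 - A3 ^ 2) * A2 - A2 * (A1 ^ 2 - A2 ^ 2 - A3 ^ 2)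
        = A1 ^ 2 * A2 - A2 * A1 ^ 2 - (A3 ^ 2 * A2 - A2 * A3 ^ 2) := by noncomm_ring
    rw [key, sub_eq_zero] at expand
    exact expand
  · -- commutes with A3
    have e1 := NCBI_aux A3 A1 (A2 + α2) h31
    have e2 := NCBI_aux A3 A2 (-A1 + α1) h23'
    have key : A1 ^ 2 * A3 - A3 * A1 ^ 2 - (A2 ^ 2 * A3 - A3 * A2 ^ 2) = 0 := by
      rw [e1, e2]; simp only [mul_add, add_mul, c2A1, c1A2]; noncomm_ring
    show (A1 ^ 2 - A2 ^ 2 - A3 ^ 2) * A3 = A3 * (A1 ^ 2 - A2 ^ 2 - A3 ^ 2)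
    have expand : (A1 ^ 2 - A2 ^ 2 - A3 ^ 2) * A3 - A3 * (A1 ^ 2 - A2 ^ 2 - A3 ^ 2)
        = A1 ^ 2 * A3 - A3 * A1 ^ 2 - (A2 ^ 2 * A3 - A3 * A2 ^ 2) := by noncomm_ring
    rw [key, sub_eq_zero] at expand
    exact expand
end

section
/- If T_0, T_1, U_0 are elements of an associative algebra with T_0² = t_0², T_1² = t_1², U_0² = u_0², (-1/2 - T_0 - T_1 - U_0)² = u_1² for central scalars t_i², u_i², then A_1 = 2T_0 + 2T_1 + 1/2, A_2 = -2T_0 - 2U_0 - 1/2, A_3 = 2T_1 + 2U_0 + 1/2 satisfy {A_1,A_2} = A_3 + 4(t_1²-t_0²+u_0²-u_1²), {A_2,A_3} = A_1 + 4(t_1²+t_0²-u_0²-u_1²), {A_3,A_1} = A_2 + 4(t_1²-t_0²-u_0²+u_1²). -/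
/-- The map from the universal degenerate double affine Hecke algebra of type
`(C₁∨, C₁)` (with `U₁` eliminated via `U₁ = -1/2 - T₀ - T₁ - U₀`) to the
Bannai–Ito algebra: the combinations `A₁, A₂, A₃` satisfy the Bannai–Ito
anticommutation relations. -/
theorem dAHA_realizes_BI {R : Type*} [Ring R] [Algebra ℂ R]
    (T0 T1 U0 : R) (t0s t1s u0s u1s : ℂ)
    (hT0 : T0 ^ 2 = algebraMap ℂ R t0s)
    (hT1 : T1 ^ 2 = algebraMap ℂ R t1s)
    (hU0 : U0 ^ 2 = algebraMap ℂ R u0s)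
    (hU1 : (algebraMap ℂ R (-(1/2)) - T0 - T1 - U0) ^ 2 = algebraMap ℂ R u1s) :
    (2 * T0 + 2 * T1 + algebraMap ℂ R (1/2)) * (-(2 * T0) - 2 * U0 - algebraMap ℂ R (1/2))
      + (-(2 * T0) - 2 * U0 - algebraMap ℂ R (1/2)) * (2 * T0 + 2 * T1 + algebraMap ℂ R (1/2))
      = (2 * T1 + 2 * U0 + algebraMap ℂ R (1/2))
        + algebraMap ℂ R (4 * (t1s - t0s + u0s - u1s)) ∧
    (-(2 * T0) - 2 * U0 - algebraMap ℂ R (1/2)) * (2 * T1 + 2 * U0 + algebraMap ℂ R (1/2))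
      + (2 * T1 + 2 * U0 + algebraMap ℂ R (1/2)) * (-(2 * T0) - 2 * U0 - algebraMap ℂ R (1/2))
      = (2 * T0 + 2 * T1 + algebraMap ℂ R (1/2))
        + algebraMap ℂ R (4 * (t1s + t0s - u0s - u1s)) ∧
    (2 * T1 + 2 * U0 + algebraMap ℂ R (1/2)) * (2 * T0 + 2 * T1 + algebraMap ℂ R (1/2))
      + (2 * T0 + 2 * T1 + algebraMap ℂ R (1/2)) * (2 * T1 + 2 * U0 + algebraMap ℂ R (1/2))
      = (-(2 * T0) - 2 * U0 - algebraMap ℂ R (1/2))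
        + algebraMap ℂ R (4 * (t1s - t0s - u0s + u1s)) := by
  simp only [map_mul, map_sub, map_add, map_neg, map_ofNat, Algebra.algebraMap_eq_smul_one]
    at hT0 hT1 hU0 hU1 ⊢
  refine ⟨?_, ?_, ?_⟩
  · linear_combination (norm := (noncomm_ring; module)) (4:R) * hT1 + 4 * hU0 - 4 * hU1 - 4 * hT0
  · linear_combination (norm := (noncomm_ring; module)) (4 : R) * hT0 + 4 * hT1 - 4 * hU0 - 4 * hU1
  · linear_combination (norm := (noncomm_ring; module)) (4:R) * hT1 + 4 * hU1 - 4 * hU0 - 4 * hT0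
end

section
/- Under the hypotheses of the previous map, the element A_1² + A_2² + A_3², with A_1 = 2T_0+2T_1+1/2, A_2 = -2T_0-2U_0-1/2, A_3 = 2T_1+2U_0+1/2, equals the central scalar 4(t_0²+t_1²+u_0²+u_1²) - 1/4. -/
private lemma casimir_aux {R : Type*} [Ring R] (a b c d h : R)
    (hsum : a + b + c + d = -h) :
    (2 * a + 2 * b + h) ^ 2 + (-(2 * a) - 2 * c - h) ^ 2
      + (2 * b + 2 * c + h) ^ 2
      = 4 * (a ^ 2 + b ^ 2 + c ^ 2 + d ^ 2) - h ^ 2 := by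
  have hd : d = -h - a - b - c := by
    rw [eq_sub_iff_add_eq, eq_sub_iff_add_eq, eq_sub_iff_add_eq, ← hsum]
    abel
  subst hd
  noncomm_ring

/-- In the realization of the Bannai–Ito algebra inside the degenerate double
affine Hecke algebra, the Casimir element `A₁² + A₂² + A₃²` takes the value
`4(t₀² + t₁² + u₀² + u₁²) - 1/4`. -/
theorem dAHA_BI_casimir_value {R : Type*} [Ring R] [Algebra ℂ R]
    (T0 T1 U0 U1 : R) (t0s t1s u0s u1s : ℂ)
    (hT0 : T0 ^ 2 = algebraMap ℂ R t0s)
    (hT1 : T1 ^ 2 = algebraMap ℂ R t1s)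
    (hU0 : U0 ^ 2 = algebraMap ℂ R u0s)
    (hU1 : U1 ^ 2 = algebraMap ℂ R u1s)
    (hsum : T0 + T1 + U0 + U1 = algebraMap ℂ R (-(1/2))) :
    (2 * T0 + 2 * T1 + algebraMap ℂ R (1/2)) ^ 2
      + (-(2 * T0) - 2 * U0 - algebraMap ℂ R (1/2)) ^ 2
      + (2 * T1 + 2 * U0 + algebraMap ℂ R (1/2)) ^ 2
      = algebraMap ℂ R (4 * (t0s + t1s + u0s + u1s) - 1/4) := by
  rw [casimir_aux T0 T1 U0 U1 (algebraMap ℂ R (1/2))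
      (by rw [hsum, ← map_neg]),
    hT0, hT1, hU0, hU1, ← map_pow]
  simp only [map_sub, map_mul, map_add, map_ofNat]
  norm_num
end

section
/- If K_1, K_2, K_3 satisfy the Bannai–Ito algebra relations with central structure constants ω_1, ω_2, ω_3, then the element T̃_0 = (1/4)(K_1 - K_2 - K_3 - 1/2) satisfies T̃_0² = (1/16)(Q + ω_1 - ω_2 - ω_3 + 1/4), where Q = K_1² + K_2² + K_3²; in particular T̃_0² commutes with K_1, K_2, K_3. -/
/-- In the Bannai–Ito algebra, the element `T̃₀ = (1/4)(K₁ - K₂ - K₃ - 1/2)`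
squares to `(1/16)(Q + ω₁ - ω₂ - ω₃ + 1/4)` where `Q = K₁² + K₂² + K₃²`;
in particular `T̃₀²` commutes with `K₁, K₂, K₃`. -/
theorem BI_T0_tilde_sq {R : Type*} [Ring R] [Algebra ℂ R]
    (K1 K2 K3 ω1 ω2 ω3 : R)
    (hω1 : ∀ x : R, Commute ω1 x) (hω2 : ∀ x : R, Commute ω2 x)
    (hω3 : ∀ x : R, Commute ω3 x)
    (h12 : K1 * K2 + K2 * K1 = K3 + ω3)
    (h23 : K2 * K3 + K3 * K2 = K1 + ω1)
    (h31 : K3 * K1 + K1 * K3 = K2 + ω2) :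
    ((1/4 : ℂ) • (K1 - K2 - K3 - algebraMap ℂ R (1/2))) ^ 2
      = (1/16 : ℂ) • (K1 ^ 2 + K2 ^ 2 + K3 ^ 2 + ω1 - ω2 - ω3 + algebraMap ℂ R (1/4)) ∧
    Commute (((1/4 : ℂ) • (K1 - K2 - K3 - algebraMap ℂ R (1/2))) ^ 2) K1 ∧
    Commute (((1/4 : ℂ) • (K1 - K2 - K3 - algebraMap ℂ R (1/2))) ^ 2) K2 ∧
    Commute (((1/4 : ℂ) • (K1 - K2 - K3 - algebraMap ℂ R (1/2))) ^ 2) K3 := by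
  set a : R := algebraMap ℂ R (1/2) with hadef
  set S : R := K1 - K2 - K3 with hSdef
  have hSa : S * a = a * S := (Algebra.commutes _ _).symm
  have haa : a + a = (1 : R) := by
    rw [hadef, ← map_add]; norm_num
  have ha2 : a * a = algebraMap ℂ R (1/4) := by
    rw [hadef, ← map_mul]; norm_num
  -- Expand the square
  have h1 : (S - a) ^ 2 = S * S - (a + a) * S + a * a := by
    rw [sq, sub_mul, mul_sub, mul_sub, hSa]; noncomm_ring
  have h2 : S * S = K1 ^ 2 + K2 ^ 2 + K3 ^ 2 - (K1 * K2 + K2 * K1)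
      - (K3 * K1 + K1 * K3) + (K2 * K3 + K3 * K2) := by
    rw [hSdef]; noncomm_ring
  have hsq : (S - a) ^ 2
      = K1 ^ 2 + K2 ^ 2 + K3 ^ 2 + ω1 - ω2 - ω3 + algebraMap ℂ R (1/4) := by
    rw [h1, haa, one_mul, ha2, h2, h12, h23, h31, hSdef]; abel
  -- Main equality
  have hmain : ((1/4 : ℂ) • (S - a)) ^ 2
      = (1/16 : ℂ) • (K1 ^ 2 + K2 ^ 2 + K3 ^ 2 + ω1 - ω2 - ω3 + algebraMap ℂ R (1/4)) := by
    rw [smul_pow, hsq]; norm_num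
  -- The Casimir commutes with each generator
  have cQ1 : Commute (K1 ^ 2 + K2 ^ 2 + K3 ^ 2) K1 := by
    have key : (K1 ^ 2 + K2 ^ 2 + K3 ^ 2) * K1 - K1 * (K1 ^ 2 + K2 ^ 2 + K3 ^ 2)
        = K2 * (K1 * K2 + K2 * K1) - (K1 * K2 + K2 * K1) * K2
          + (K3 * (K3 * K1 + K1 * K3) - (K3 * K1 + K1 * K3) * K3) := by noncomm_ring
    rw [h12, h31] at key
    have e3 := (hω3 K2).eq
    have e2 := (hω2 K3).eq
    have : (K1 ^ 2 + K2 ^ 2 + K3 ^ 2) * K1 - K1 * (K1 ^ 2 + K2 ^ 2 + K3 ^ 2) = 0 := by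
      rw [key, mul_add, add_mul, mul_add, add_mul, e3, e2]; noncomm_ring
    exact sub_eq_zero.mp this
  have cQ2 : Commute (K1 ^ 2 + K2 ^ 2 + K3 ^ 2) K2 := by
    have key : (K1 ^ 2 + K2 ^ 2 + K3 ^ 2) * K2 - K2 * (K1 ^ 2 + K2 ^ 2 + K3 ^ 2)
        = K1 * (K1 * K2 + K2 * K1) - (K1 * K2 + K2 * K1) * K1
          + (K3 * (K2 * K3 + K3 * K2) - (K2 * K3 + K3 * K2) * K3) := by noncomm_ring
    rw [h12, h23] at key
    have e3 := (hω3 K1).eq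
    have e1 := (hω1 K3).eq
    have : (K1 ^ 2 + K2 ^ 2 + K3 ^ 2) * K2 - K2 * (K1 ^ 2 + K2 ^ 2 + K3 ^ 2) = 0 := by
      rw [key, mul_add, add_mul, mul_add, add_mul, e3, e1]; noncomm_ring
    exact sub_eq_zero.mp this
  have cQ3 : Commute (K1 ^ 2 + K2 ^ 2 + K3 ^ 2) K3 := by
    have key : (K1 ^ 2 + K2 ^ 2 + K3 ^ 2) * K3 - K3 * (K1 ^ 2 + K2 ^ 2 + K3 ^ 2)
        = K1 * (K3 * K1 + K1 * K3) - (K3 * K1 + K1 * K3) * K1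
          + (K2 * (K2 * K3 + K3 * K2) - (K2 * K3 + K3 * K2) * K2) := by noncomm_ring
    rw [h31, h23] at key
    have e2 := (hω2 K1).eq
    have e1 := (hω1 K2).eq
    have : (K1 ^ 2 + K2 ^ 2 + K3 ^ 2) * K3 - K3 * (K1 ^ 2 + K2 ^ 2 + K3 ^ 2) = 0 := by
      rw [key, mul_add, add_mul, mul_add, add_mul, e2, e1]; noncomm_ring
    exact sub_eq_zero.mp this
  have cW : ∀ x : R, Commute (K1 ^ 2 + K2 ^ 2 + K3 ^ 2) x →
      Commute (K1 ^ 2 + K2 ^ 2 + K3 ^ 2 + ω1 - ω2 - ω3 + algebraMap ℂ R (1/4)) x := by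
    intro x hx
    exact (((hx.add_left (hω1 x)).sub_left (hω2 x)).sub_left (hω3 x)).add_left
      (Algebra.commutes _ _)
  refine ⟨hmain, ?_, ?_, ?_⟩
  · rw [hmain]; exact (cW K1 cQ1).smul_left _
  · rw [hmain]; exact (cW K2 cQ2).smul_left _
  · rw [hmain]; exact (cW K3 cQ3).smul_left _
end

section
/- If K_1, K_2, K_3 satisfy the Bannai–Ito algebra relations with central ω_1, ω_2, ω_3, then the four elements T̃_0 = (1/4)(K_1-K_2-K_3-1/2), T̃_1 = (1/4)(K_1+K_2+K_3-1/2), Ũ_0 = (1/4)(-K_1-K_2+K_3-1/2), Ũ_1 = (1/4)(-K_1+K_2-K_3-1/2) sum to -1/2, and each of T̃_0², T̃_1², Ũ_0², Ũ_1² is central, equal to (1/16)(Q + ε_1 ω_1 + ε_2 ω_2 + ε_3 ω_3 + 1/4) with appropriate signs ε_i ∈ {±1} and Q = K_1² + K_2² + K_3². -/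
/-- In the Bannai–Ito algebra, the four elements `T̃₀, T̃₁, Ũ₀, Ũ₁` sum to
`-1/2` and their squares are central (they commute with the generators
`K₁, K₂, K₃`), equal to `(1/16)(Q + ε₁ω₁ + ε₂ω₂ + ε₃ω₃ + 1/4)` with the sign
patterns `T̃₀² : (+,-,-)`, `T̃₁² : (+,+,+)`, `Ũ₀² : (-,-,+)`, `Ũ₁² : (-,+,-)`,
where `Q = K₁² + K₂² + K₃²`. -/
theorem BI_to_dAHA {R : Type*} [Ring R] [Algebra ℂ R]
    (K1 K2 K3 ω1 ω2 ω3 : R)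
    (hω1 : ∀ x : R, Commute ω1 x) (hω2 : ∀ x : R, Commute ω2 x)
    (hω3 : ∀ x : R, Commute ω3 x)
    (h12 : K1 * K2 + K2 * K1 = K3 + ω3)
    (h23 : K2 * K3 + K3 * K2 = K1 + ω1)
    (h31 : K3 * K1 + K1 * K3 = K2 + ω2) :
    ((1/4 : ℂ) • (K1 - K2 - K3 - algebraMap ℂ R (1/2)))
      + ((1/4 : ℂ) • (K1 + K2 + K3 - algebraMap ℂ R (1/2)))
      + ((1/4 : ℂ) • (-K1 - K2 + K3 - algebraMap ℂ R (1/2)))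
      + ((1/4 : ℂ) • (-K1 + K2 - K3 - algebraMap ℂ R (1/2)))
      = algebraMap ℂ R (-(1/2)) ∧
    ((1/4 : ℂ) • (K1 - K2 - K3 - algebraMap ℂ R (1/2))) ^ 2
      = (1/16 : ℂ) • (K1 ^ 2 + K2 ^ 2 + K3 ^ 2 + ω1 - ω2 - ω3 + algebraMap ℂ R (1/4)) ∧
    ((1/4 : ℂ) • (K1 + K2 + K3 - algebraMap ℂ R (1/2))) ^ 2
      = (1/16 : ℂ) • (K1 ^ 2 + K2 ^ 2 + K3 ^ 2 + ω1 + ω2 + ω3 + algebraMap ℂ R (1/4)) ∧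
    ((1/4 : ℂ) • (-K1 - K2 + K3 - algebraMap ℂ R (1/2))) ^ 2
      = (1/16 : ℂ) • (K1 ^ 2 + K2 ^ 2 + K3 ^ 2 - ω1 - ω2 + ω3 + algebraMap ℂ R (1/4)) ∧
    ((1/4 : ℂ) • (-K1 + K2 - K3 - algebraMap ℂ R (1/2))) ^ 2
      = (1/16 : ℂ) • (K1 ^ 2 + K2 ^ 2 + K3 ^ 2 - ω1 + ω2 - ω3 + algebraMap ℂ R (1/4)) ∧
    (∀ ε1 ε2 ε3 : ℂ, (ε1 = 1 ∨ ε1 = -1) → (ε2 = 1 ∨ ε2 = -1) → (ε3 = 1 ∨ ε3 = -1) →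
      ∀ K : R, (K = K1 ∨ K = K2 ∨ K = K3) →
        Commute ((1/16 : ℂ) •
          (K1 ^ 2 + K2 ^ 2 + K3 ^ 2 + ε1 • ω1 + ε2 • ω2 + ε3 • ω3 + algebraMap ℂ R (1/4))) K) := by
  set s : R := algebraMap ℂ R (1/2) with hs
  -- basic facts about s
  have hx : ∀ x : R, x * s + s * x = x := by
    intro x
    rw [hs, Algebra.commutes (1/2 : ℂ) x, ← mul_add, ← map_add]
    norm_num
  have hss : s * s = algebraMap ℂ R (1/4) := by
    rw [hs, ← map_mul]
    norm_num
  -- squares reduce to T*T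
  have hsq : ∀ T : R, ((1/4 : ℂ) • T) ^ 2 = (1/16 : ℂ) • (T * T) := by
    intro T
    rw [sq, smul_mul_assoc, mul_smul_comm, smul_smul]
    norm_num
  -- the four products
  have key0 : (K1 - K2 - K3 - s) * (K1 - K2 - K3 - s)
      = K1 ^ 2 + K2 ^ 2 + K3 ^ 2 + ω1 - ω2 - ω3 + algebraMap ℂ R (1/4) := by
    calc (K1 - K2 - K3 - s) * (K1 - K2 - K3 - s)
        = K1 ^ 2 + K2 ^ 2 + K3 ^ 2 + (K2 * K3 + K3 * K2) - (K1 * K2 + K2 * K1)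
            - (K3 * K1 + K1 * K3) - (K1 * s + s * K1) + (K2 * s + s * K2)
            + (K3 * s + s * K3) + s * s := by noncomm_ring
      _ = K1 ^ 2 + K2 ^ 2 + K3 ^ 2 + ω1 - ω2 - ω3 + algebraMap ℂ R (1/4) := by
          rw [h12, h23, h31, hx K1, hx K2, hx K3, hss]; abel
  have key1 : (K1 + K2 + K3 - s) * (K1 + K2 + K3 - s)
      = K1 ^ 2 + K2 ^ 2 + K3 ^ 2 + ω1 + ω2 + ω3 + algebraMap ℂ R (1/4) := by
    calc (K1 + K2 + K3 - s) * (K1 + K2 + K3 - s)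
        = K1 ^ 2 + K2 ^ 2 + K3 ^ 2 + (K2 * K3 + K3 * K2) + (K1 * K2 + K2 * K1)
            + (K3 * K1 + K1 * K3) - (K1 * s + s * K1) - (K2 * s + s * K2)
            - (K3 * s + s * K3) + s * s := by noncomm_ring
      _ = K1 ^ 2 + K2 ^ 2 + K3 ^ 2 + ω1 + ω2 + ω3 + algebraMap ℂ R (1/4) := by
          rw [h12, h23, h31, hx K1, hx K2, hx K3, hss]; abel
  have key2 : (-K1 - K2 + K3 - s) * (-K1 - K2 + K3 - s)
      = K1 ^ 2 + K2 ^ 2 + K3 ^ 2 - ω1 - ω2 + ω3 + algebraMap ℂ R (1/4) := by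
    calc (-K1 - K2 + K3 - s) * (-K1 - K2 + K3 - s)
        = K1 ^ 2 + K2 ^ 2 + K3 ^ 2 - (K2 * K3 + K3 * K2) + (K1 * K2 + K2 * K1)
            - (K3 * K1 + K1 * K3) + (K1 * s + s * K1) + (K2 * s + s * K2)
            - (K3 * s + s * K3) + s * s := by noncomm_ring
      _ = K1 ^ 2 + K2 ^ 2 + K3 ^ 2 - ω1 - ω2 + ω3 + algebraMap ℂ R (1/4) := by
          rw [h12, h23, h31, hx K1, hx K2, hx K3, hss]; abel
  have key3 : (-K1 + K2 - K3 - s) * (-K1 + K2 - K3 - s)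
      = K1 ^ 2 + K2 ^ 2 + K3 ^ 2 - ω1 + ω2 - ω3 + algebraMap ℂ R (1/4) := by
    calc (-K1 + K2 - K3 - s) * (-K1 + K2 - K3 - s)
        = K1 ^ 2 + K2 ^ 2 + K3 ^ 2 - (K2 * K3 + K3 * K2) - (K1 * K2 + K2 * K1)
            + (K3 * K1 + K1 * K3) + (K1 * s + s * K1) - (K2 * s + s * K2)
            + (K3 * s + s * K3) + s * s := by noncomm_ring
      _ = K1 ^ 2 + K2 ^ 2 + K3 ^ 2 - ω1 + ω2 - ω3 + algebraMap ℂ R (1/4) := by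
          rw [h12, h23, h31, hx K1, hx K2, hx K3, hss]; abel
  -- centrality of the Casimir Q = K1^2 + K2^2 + K3^2
  have c32 : K2 * (K3 + ω3) - (K3 + ω3) * K2 = K2 * K3 - K3 * K2 := by
    rw [mul_add, add_mul, hω3 K2]; abel
  have c23 : K3 * (K2 + ω2) - (K2 + ω2) * K3 = K3 * K2 - K2 * K3 := by
    rw [mul_add, add_mul, hω2 K3]; abel
  have c13 : K1 * (K3 + ω3) - (K3 + ω3) * K1 = K1 * K3 - K3 * K1 := by
    rw [mul_add, add_mul, hω3 K1]; abel
  have c31 : K3 * (K1 + ω1) - (K1 + ω1) * K3 = K3 * K1 - K1 * K3 := by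
    rw [mul_add, add_mul, hω1 K3]; abel
  have c12 : K1 * (K2 + ω2) - (K2 + ω2) * K1 = K1 * K2 - K2 * K1 := by
    rw [mul_add, add_mul, hω2 K1]; abel
  have c21 : K2 * (K1 + ω1) - (K1 + ω1) * K2 = K2 * K1 - K1 * K2 := by
    rw [mul_add, add_mul, hω1 K2]; abel
  have q1 : Commute (K1 ^ 2 + K2 ^ 2 + K3 ^ 2) K1 := by
    show (K1 ^ 2 + K2 ^ 2 + K3 ^ 2) * K1 = K1 * (K1 ^ 2 + K2 ^ 2 + K3 ^ 2)
    calc (K1 ^ 2 + K2 ^ 2 + K3 ^ 2) * K1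
        = K1 * (K1 ^ 2 + K2 ^ 2 + K3 ^ 2)
            + ((K2 * (K1 * K2 + K2 * K1) - (K1 * K2 + K2 * K1) * K2)
              + (K3 * (K3 * K1 + K1 * K3) - (K3 * K1 + K1 * K3) * K3)) := by noncomm_ring
      _ = K1 * (K1 ^ 2 + K2 ^ 2 + K3 ^ 2)
            + ((K2 * (K3 + ω3) - (K3 + ω3) * K2)
              + (K3 * (K2 + ω2) - (K2 + ω2) * K3)) := by rw [h12, h31]
      _ = K1 * (K1 ^ 2 + K2 ^ 2 + K3 ^ 2) := by rw [c32, c23]; abel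
  have q2 : Commute (K1 ^ 2 + K2 ^ 2 + K3 ^ 2) K2 := by
    show (K1 ^ 2 + K2 ^ 2 + K3 ^ 2) * K2 = K2 * (K1 ^ 2 + K2 ^ 2 + K3 ^ 2)
    calc (K1 ^ 2 + K2 ^ 2 + K3 ^ 2) * K2
        = K2 * (K1 ^ 2 + K2 ^ 2 + K3 ^ 2)
            + ((K1 * (K1 * K2 + K2 * K1) - (K1 * K2 + K2 * K1) * K1)
              + (K3 * (K2 * K3 + K3 * K2) - (K2 * K3 + K3 * K2) * K3)) := by noncomm_ring
      _ = K2 * (K1 ^ 2 + K2 ^ 2 + K3 ^ 2)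
            + ((K1 * (K3 + ω3) - (K3 + ω3) * K1)
              + (K3 * (K1 + ω1) - (K1 + ω1) * K3)) := by rw [h12, h23]
      _ = K2 * (K1 ^ 2 + K2 ^ 2 + K3 ^ 2) := by rw [c13, c31]; abel
  have q3 : Commute (K1 ^ 2 + K2 ^ 2 + K3 ^ 2) K3 := by
    show (K1 ^ 2 + K2 ^ 2 + K3 ^ 2) * K3 = K3 * (K1 ^ 2 + K2 ^ 2 + K3 ^ 2)
    calc (K1 ^ 2 + K2 ^ 2 + K3 ^ 2) * K3
        = K3 * (K1 ^ 2 + K2 ^ 2 + K3 ^ 2)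
            + ((K1 * (K3 * K1 + K1 * K3) - (K3 * K1 + K1 * K3) * K1)
              + (K2 * (K2 * K3 + K3 * K2) - (K2 * K3 + K3 * K2) * K2)) := by noncomm_ring
      _ = K3 * (K1 ^ 2 + K2 ^ 2 + K3 ^ 2)
            + ((K1 * (K2 + ω2) - (K2 + ω2) * K1)
              + (K2 * (K1 + ω1) - (K1 + ω1) * K2)) := by rw [h31, h23]
      _ = K3 * (K1 ^ 2 + K2 ^ 2 + K3 ^ 2) := by rw [c12, c21]; abel
  refine ⟨?_, ?_, ?_, ?_, ?_, ?_⟩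
  · -- the sum identity
    rw [← smul_add, ← smul_add, ← smul_add]
    have inner : (K1 - K2 - K3 - s) + (K1 + K2 + K3 - s) + (-K1 - K2 + K3 - s)
        + (-K1 + K2 - K3 - s) = algebraMap ℂ R (-2) := by
      have : algebraMap ℂ R (-2 : ℂ) = -(s + s + s + s) := by
        rw [hs, ← map_add, ← map_add, ← map_add, ← map_neg]
        norm_num
      rw [this]; abel
    rw [inner, Algebra.algebraMap_eq_smul_one (-2 : ℂ),
      Algebra.algebraMap_eq_smul_one (-(1/2) : ℂ), smul_smul]
    norm_num
  · rw [hsq, key0]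
  · rw [hsq, key1]
  · rw [hsq, key2]
  · rw [hsq, key3]
  · rintro ε1 ε2 ε3 - - - K hK
    have hQ : Commute (K1 ^ 2 + K2 ^ 2 + K3 ^ 2) K := by
      rcases hK with rfl | rfl | rfl
      exacts [q1, q2, q3]
    have hc : Commute (algebraMap ℂ R (1/4)) K := Algebra.commutes _ _
    exact ((((hQ.add_left ((hω1 K).smul_left ε1)).add_left
      ((hω2 K).smul_left ε2)).add_left ((hω3 K).smul_left ε3)).add_left hc).smul_left _
end
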